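/- If A is Schur stable and X is symmetric with A X Aᵀ − X ⪯ 0, then X ⪰ 0. -/

import Mathlib

/-!
Iterating the hypothesis telescopes: `X - Aᴺ X (Aᴺ)ᴴ = ∑ k < N, Aᵏ (X - A X Aᴴ) (Aᵏ)ᴴ ⪰ 0`.
Schur stability makes `Aᴺ → 0` (Gelfand's formula), so the quadratic forms of `X - Aᴺ X (Aᴺ)ᴴ`,
all nonnegative, converge to that of `X`.
-/

open Matrix Filter Topology

section BanachAlgebra

variable {A : Type*} [NormedRing A] [NormedAlgebra ℂ A] [CompleteSpace A]

theorem spectrum.spectralRadius_lt_one_of_forall_norm_lt_one {a : A}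
    (h : ∀ z ∈ spectrum ℂ a, ‖z‖ < 1) : spectralRadius ℂ a < 1 := by
  rcases (spectrum ℂ a).eq_empty_or_nonempty with hempty | hne
  · simp [spectralRadius, hempty]
  · exact_mod_cast spectrum.spectralRadius_lt_of_forall_lt_of_nonempty hne
      (r := 1) fun z hz => mod_cast h z hz

/-- By Gelfand's formula, `‖a ^ N‖ ≤ r ^ N` eventually, for any `r` above the spectral radius. -/
theorem tendsto_pow_atTop_nhds_zero_of_spectralRadius_lt_one {a : A}
    (h : spectralRadius ℂ a < 1) : Tendsto (a ^ ·) atTop (𝓝 0) := by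
  obtain ⟨r, hρr, hr1⟩ := ENNReal.lt_iff_exists_nnreal_btwn.mp h
  have hbound : ∀ᶠ N : ℕ in atTop, ‖a ^ N‖ ≤ (r : ℝ) ^ N := by
    filter_upwards [(spectrum.pow_nnnorm_pow_one_div_tendsto_nhds_spectralRadius a).eventually_lt_const
      hρr, eventually_ge_atTop 1] with N hN hN1
    have hNpos : (0 : ℝ) < N := by positivity
    have : (‖a ^ N‖₊ : ENNReal) ≤ (r : ENNReal) ^ N :=
      calc (‖a ^ N‖₊ : ENNReal) = ((‖a ^ N‖₊ : ENNReal) ^ ((1 : ℝ) / N)) ^ (N : ℝ) := by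
            rw [← ENNReal.rpow_mul, one_div_mul_cancel hNpos.ne', ENNReal.rpow_one]
        _ ≤ (r : ENNReal) ^ (N : ℝ) := ENNReal.rpow_le_rpow hN.le hNpos.le
        _ = (r : ENNReal) ^ N := ENNReal.rpow_natCast _ N
    exact_mod_cast this
  refine squeeze_zero_norm' hbound (tendsto_pow_atTop_nhds_zero_of_lt_one r.2 ?_)
  exact_mod_cast ENNReal.coe_lt_coe.mp (by simpa using hr1)

end BanachAlgebra

namespace Matrix

variable {ι : Type*} [Fintype ι] [DecidableEq ι]

section

-- Any submultiplicative norm would do; this one induces the product topology on matrices.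
attribute [local instance] Matrix.linftyOpNormedRing Matrix.linftyOpNormedAlgebra

theorem tendsto_pow_atTop_nhds_zero_of_norm_spectrum_lt_one {B : Matrix ι ι ℂ}
    (h : ∀ z ∈ spectrum ℂ B, ‖z‖ < 1) : Tendsto (B ^ ·) atTop (𝓝 0) :=
  haveI : CompleteSpace (Matrix ι ι ℂ) := FiniteDimensional.complete ℂ _
  tendsto_pow_atTop_nhds_zero_of_spectralRadius_lt_one
    (spectrum.spectralRadius_lt_one_of_forall_norm_lt_one h)

end

theorem tendsto_pow_atTop_nhds_zero_of_norm_spectrum_map_ofReal_lt_one {A : Matrix ι ι ℝ}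
    (h : ∀ z ∈ spectrum ℂ (A.map Complex.ofReal), ‖z‖ < 1) : Tendsto (A ^ ·) atTop (𝓝 0) := by
  have hre := (continuous_id.matrix_map Complex.continuous_re).tendsto 0 |>.comp
    (tendsto_pow_atTop_nhds_zero_of_norm_spectrum_lt_one h)
  convert hre using 1
  · ext N i j
    have hpow : A.map Complex.ofReal ^ N = (A ^ N).map Complex.ofReal :=
      (map_pow Complex.ofRealHom.mapMatrix A N).symm
    simp [hpow]
  · simp

open scoped ComplexOrder in
theorem PosSemidef.of_posSemidef_sub_mul_mul_conjTranspose {𝕜 : Type*} [RCLike 𝕜]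
    {A X : Matrix ι ι 𝕜} (hX : X.IsHermitian) (hA : Tendsto (fun N : ℕ => A ^ N) atTop (𝓝 0))
    (h : (X - A * X * Aᴴ).PosSemidef) : X.PosSemidef := by
  have htelescope : ∀ N, (X - A ^ N * X * (A ^ N)ᴴ).PosSemidef := by
    intro N
    induction N with
    | zero => simpa using PosSemidef.zero
    | succ N ih =>
      convert ih.add (h.mul_mul_conjTranspose_same (A ^ N)) using 1
      rw [pow_succ, conjTranspose_mul]
      noncomm_ring
  refine .of_dotProduct_mulVec_nonneg hX fun v => ?_
  have hcont : Continuous fun M : Matrix ι ι 𝕜 => star v ⬝ᵥ (X - M * X * Mᴴ) *ᵥ v := by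
    fun_prop
  have hlim := (hcont.tendsto 0).comp hA
  simp only [zero_mul, sub_zero, Function.comp_def] at hlim
  exact ge_of_tendsto' hlim fun N => (htelescope N).dotProduct_mulVec_nonneg v

end Matrix

/-- If `A` is Schur stable and `X` is symmetric with `A X Aᵀ − X ⪯ 0`, then `X ⪰ 0`. -/
theorem stmt_2 {n : ℕ} (A X : Matrix (Fin n) (Fin n) ℝ)
    (hA : ∀ μ ∈ spectrum ℂ (A.map (Complex.ofReal)), ‖μ‖ < 1)
    (hX : X.IsHermitian)
    (hineq : (-(A * X * Aᵀ - X)).PosSemidef) :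
    X.PosSemidef := by
  rw [neg_sub, ← conjTranspose_eq_transpose_of_trivial] at hineq
  exact .of_posSemidef_sub_mul_mul_conjTranspose hX
    (tendsto_pow_atTop_nhds_zero_of_norm_spectrum_map_ofReal_lt_one hA) hineq
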